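/- arXiv:1802.06126 — 4 statements merged into one kernel-verified Lean document; each statement's English description precedes it below -/
import Mathlib

section
/- Let J and D be symmetric matrices with zero diagonal defining Ising models with free energies log Z and log Z_D, and let W = J - D. Then |log Z - log Z_D| ≤ ‖W‖_{∞→1}, where ‖W‖_{∞→1} = sup_{‖x‖_∞ ≤ 1} ‖Wx‖_1. -/
open Finset

def spin (b : Bool) : ℝ := if b then 1 else -1

noncomputable def isingEnergy {n : ℕ} (J : Matrix (Fin n) (Fin n) ℝ) (x : Fin n → Bool) : ℝ :=
  ∑ i, ∑ j, J i j * spin (x i) * spin (x j)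

noncomputable def partitionFn {n : ℕ} (J : Matrix (Fin n) (Fin n) ℝ) : ℝ :=
  ∑ x : Fin n → Bool, Real.exp (isingEnergy J x)

/-- ‖W‖_{∞→1} : sup over x ∈ [-1,1]^n of ∑ i |∑ j W i j * x j|. -/
noncomputable def normInftyOne {n : ℕ} (W : Matrix (Fin n) (Fin n) ℝ) : ℝ :=
  ⨆ x : {x : Fin n → ℝ // ∀ i, |x i| ≤ 1}, ∑ i, |∑ j, W i j * x.1 j|

/-! The energies of every configuration under `J` and `D` differ by the quadratic form of
`W = J - D` at a `±1` vector, which is at most `‖W‖_{∞→1}` in absolute value; and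
`f ↦ log ∑ exp f` is `1`-Lipschitz for the sup norm, since shifting every exponent by at most
`c` multiplies the sum by at most `exp c`. -/

lemma log_sum_exp_le_log_sum_exp_add {α : Type*} [Fintype α] [Nonempty α] {f g : α → ℝ}
    {c : ℝ} (h : ∀ x, f x ≤ g x + c) :
    Real.log (∑ x, Real.exp (f x)) ≤ Real.log (∑ x, Real.exp (g x)) + c := by
  have hpos : 0 < ∑ x, Real.exp (g x) := Finset.sum_pos (fun x _ ↦ Real.exp_pos _) univ_nonempty
  calc Real.log (∑ x, Real.exp (f x))
      ≤ Real.log (∑ x, Real.exp (g x) * Real.exp c) := by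
        refine Real.log_le_log (Finset.sum_pos (fun x _ ↦ Real.exp_pos _) univ_nonempty) ?_
        gcongr with x
        rw [← Real.exp_add]
        exact Real.exp_le_exp.2 (h x)
    _ = Real.log (∑ x, Real.exp (g x)) + c := by
        rw [← Finset.sum_mul, Real.log_mul hpos.ne' (Real.exp_pos c).ne', Real.log_exp]

lemma abs_log_sum_exp_sub_le {α : Type*} [Fintype α] [Nonempty α] {f g : α → ℝ} {c : ℝ}
    (h : ∀ x, |f x - g x| ≤ c) :
    |Real.log (∑ x, Real.exp (f x)) - Real.log (∑ x, Real.exp (g x))| ≤ c := by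
  rw [abs_sub_le_iff]
  constructor
  · linarith [log_sum_exp_le_log_sum_exp_add (f := f) (g := g) (c := c)
      fun x ↦ by linarith [(abs_le.1 (h x)).2]]
  · linarith [log_sum_exp_le_log_sum_exp_add (f := g) (g := f) (c := c)
      fun x ↦ by linarith [(abs_le.1 (h x)).1]]

lemma abs_spin (b : Bool) : |spin b| = 1 := by
  cases b <;> simp [spin]

lemma isingEnergy_eq_sum_mul {n : ℕ} (W : Matrix (Fin n) (Fin n) ℝ) (x : Fin n → Bool) :
    isingEnergy W x = ∑ i, spin (x i) * ∑ j, W i j * spin (x j) := by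
  simp only [isingEnergy, Finset.mul_sum]
  exact Finset.sum_congr rfl fun i _ ↦ Finset.sum_congr rfl fun j _ ↦ by ring

lemma isingEnergy_sub {n : ℕ} (J D : Matrix (Fin n) (Fin n) ℝ) (x : Fin n → Bool) :
    isingEnergy (J - D) x = isingEnergy J x - isingEnergy D x := by
  simp only [isingEnergy, Matrix.sub_apply, ← Finset.sum_sub_distrib, sub_mul]

lemma bddAbove_normInftyOne {n : ℕ} (W : Matrix (Fin n) (Fin n) ℝ) :
    BddAbove (Set.range fun x : {x : Fin n → ℝ // ∀ i, |x i| ≤ 1} ↦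
      ∑ i, |∑ j, W i j * x.1 j|) := by
  refine ⟨∑ i, ∑ j, |W i j|, ?_⟩
  rintro _ ⟨x, rfl⟩
  refine Finset.sum_le_sum fun i _ ↦
    (Finset.abs_sum_le_sum_abs _ _).trans (Finset.sum_le_sum fun j _ ↦ ?_)
  rw [abs_mul]
  exact mul_le_of_le_one_right (abs_nonneg _) (x.2 j)

lemma le_normInftyOne {n : ℕ} (W : Matrix (Fin n) (Fin n) ℝ) {x : Fin n → ℝ}
    (hx : ∀ i, |x i| ≤ 1) : ∑ i, |∑ j, W i j * x j| ≤ normInftyOne W :=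
  le_ciSup (bddAbove_normInftyOne W) ⟨x, hx⟩

lemma abs_isingEnergy_le_normInftyOne {n : ℕ} (W : Matrix (Fin n) (Fin n) ℝ)
    (x : Fin n → Bool) : |isingEnergy W x| ≤ normInftyOne W := by
  calc |isingEnergy W x|
      ≤ ∑ i, |spin (x i) * ∑ j, W i j * spin (x j)| := by
        rw [isingEnergy_eq_sum_mul]
        exact Finset.abs_sum_le_sum_abs _ _
    _ = ∑ i, |∑ j, W i j * spin (x j)| := by simp only [abs_mul, abs_spin, one_mul]
    _ ≤ normInftyOne W := le_normInftyOne W fun i ↦ (abs_spin (x i)).le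

theorem free_energy_lipschitz_cut_norm_general (n : ℕ) (J D : Matrix (Fin n) (Fin n) ℝ) :
    |Real.log (partitionFn J) - Real.log (partitionFn D)| ≤ normInftyOne (J - D) :=
  abs_log_sum_exp_sub_le fun x ↦ by
    rw [← isingEnergy_sub]
    exact abs_isingEnergy_le_normInftyOne (J - D) x

theorem free_energy_lipschitz_cut_norm (n : ℕ) (J D : Matrix (Fin n) (Fin n) ℝ)
    (hJsymm : J.IsSymm) (hJdiag : ∀ i, J i i = 0)
    (hDsymm : D.IsSymm) (hDdiag : ∀ i, D i i = 0) :
    |Real.log (partitionFn J) - Real.log (partitionFn D)| ≤ normInftyOne (J - D) :=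
  free_energy_lipschitz_cut_norm_general n J D
end

section
/- Suppose J is a real symmetric n×n matrix with zero diagonal such that ∑_j 2|J_{ij}| ≤ 1 for every row i, and h ∈ ℝ^n. Then the function x ↦ ∑_{i,j} J_{ij} x_i x_j + ∑_i h_i x_i + ∑_i H((1+x_i)/2) is concave on [-1,1]^n. -/
open Finset

noncomputable def binEnt (p : ℝ) : ℝ := -p * Real.log p - (1 - p) * Real.log (1 - p)

lemma binEnt_eq : binEnt = Real.binEntropy := by
  funext p
  simp [binEnt, Real.binEntropy, Real.log_inv]
  ring

lemma oneDim_hasDeriv (c b : ℝ) {x : ℝ} (hx : x ∈ Set.Ioo (-1:ℝ) 1) :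
    HasDerivAt (fun x => c * x ^ 2 + b * x + Real.binEntropy ((1 + x) / 2))
      (2 * c * x + b + (1 / 2) * (Real.log (1 - x) - Real.log (1 + x))) x := by
  obtain ⟨hx1, hx2⟩ := hx
  have h1 : (0:ℝ) < 1 + x := by linarith
  have h2 : (0:ℝ) < 1 - x := by linarith
  have hp0 : (1 + x) / 2 ≠ 0 := by positivity
  have hp1 : (1 + x) / 2 ≠ 1 := by intro hc; rw [div_eq_one_iff_eq two_ne_zero] at hc; linarith
  have hinner : HasDerivAt (fun x : ℝ => (1 + x) / 2) (1 / 2) x := by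
    simpa using ((hasDerivAt_id x).const_add 1).div_const 2
  have hent := (Real.hasDerivAt_binEntropy hp0 hp1).comp x hinner
  have hq : HasDerivAt (fun x : ℝ => c * x ^ 2 + b * x) (c * (2 * x) + b) x := by
    have := ((hasDerivAt_pow 2 x).const_mul c).add ((hasDerivAt_id x).const_mul b)
    exact this.congr_deriv (by norm_num)
  have htot := hq.add hent
  convert htot using 1
  · rfl
  · rfl
  · rfl
  have e1 : (1:ℝ) - (1 + x) / 2 = (1 - x) / 2 := by ring
  rw [Function.comp_def, e1] at *
  rw [Real.log_div h2.ne' two_ne_zero, Real.log_div h1.ne' two_ne_zero]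
  ring

lemma hasDerivAt_g' (c b : ℝ) {x : ℝ} (hx : x ∈ Set.Ioo (-1:ℝ) 1) :
    HasDerivAt (fun x => 2 * c * x + b + (1 / 2) * (Real.log (1 - x) - Real.log (1 + x)))
      (2 * c + (1 / 2) * (-(1 / (1 - x)) - 1 / (1 + x))) x := by
  obtain ⟨hx1, hx2⟩ := hx
  have h1 : (0:ℝ) < 1 + x := by linarith
  have h2 : (0:ℝ) < 1 - x := by linarith
  have hl1 : HasDerivAt (fun x : ℝ => Real.log (1 - x)) ((1 - x)⁻¹ * (-1)) x :=
    (Real.hasDerivAt_log h2.ne').comp x (((hasDerivAt_id x).const_sub 1))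
  have hl2 : HasDerivAt (fun x : ℝ => Real.log (1 + x)) ((1 + x)⁻¹ * 1) x :=
    (Real.hasDerivAt_log h1.ne').comp x (((hasDerivAt_id x).const_add 1))
  have hlin : HasDerivAt (fun x : ℝ => 2 * c * x + b) (2 * c) x := by
    simpa using ((hasDerivAt_id x).const_mul (2 * c)).add_const b
  have := hlin.add (((hl1.sub hl2)).const_mul (1 / 2))
  convert this using 1
  · rfl
  · rfl
  · rfl
  field_simp

lemma oneDim_concave (c b : ℝ) (hc : c ≤ 1 / 2) :
    ConcaveOn ℝ (Set.Icc (-1:ℝ) 1)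
      (fun x => c * x ^ 2 + b * x + Real.binEntropy ((1 + x) / 2)) := by
  have hderiv : ∀ x ∈ Set.Ioo (-1:ℝ) 1,
      deriv (fun x => c * x ^ 2 + b * x + Real.binEntropy ((1 + x) / 2)) x
        = 2 * c * x + b + (1 / 2) * (Real.log (1 - x) - Real.log (1 + x)) :=
    fun x hx => (oneDim_hasDeriv c b hx).deriv
  apply AntitoneOn.concaveOn_of_deriv (convex_Icc _ _)
  · apply Continuous.continuousOn
    fun_prop
  · rw [interior_Icc]
    exact fun x hx => ((oneDim_hasDeriv c b hx).differentiableAt).differentiableWithinAt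
  · rw [interior_Icc]
    have hanti : AntitoneOn
        (fun x => 2 * c * x + b + (1 / 2) * (Real.log (1 - x) - Real.log (1 + x)))
        (Set.Ioo (-1:ℝ) 1) := by
      apply antitoneOn_of_deriv_nonpos (convex_Ioo _ _)
      · apply ContinuousOn.add
        · fun_prop
        · apply ContinuousOn.mul continuousOn_const
          apply ContinuousOn.sub
          · apply Real.continuousOn_log.comp (Continuous.continuousOn (by fun_prop))
            intro x hx
            have : (0:ℝ) < 1 - x := by linarith [hx.2]
            simp [this.ne']
          · apply Real.continuousOn_log.comp (Continuous.continuousOn (by fun_prop))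
            intro x hx
            have : (0:ℝ) < 1 + x := by linarith [hx.1]
            simp [this.ne']
      · rw [interior_Ioo]
        exact fun x hx => (hasDerivAt_g' c b hx).differentiableAt.differentiableWithinAt
      · rw [interior_Ioo]
        intro x hx
        rw [(hasDerivAt_g' c b hx).deriv]
        have h1 : (0:ℝ) < 1 + x := by linarith [hx.1]
        have h2 : (0:ℝ) < 1 - x := by linarith [hx.2]
        have key : 1 / (1 - x) + 1 / (1 + x) ≥ 2 := by
          rw [div_add_div _ _ h2.ne' h1.ne', ge_iff_le, le_div_iff₀ (by positivity)]
          nlinarith [sq_nonneg x]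
        nlinarith [sq_nonneg x]
    intro a ha b hb hab
    rw [hderiv a ha, hderiv b hb]
    exact hanti ha hb hab

lemma concaveOn_finsetSum {ι E : Type*} [AddCommGroup E] [Module ℝ E] {S : Set E}
    {t : Finset ι} {f : ι → E → ℝ} (hS : Convex ℝ S) (hf : ∀ i ∈ t, ConcaveOn ℝ S (f i)) :
    ConcaveOn ℝ S (fun x => ∑ i ∈ t, f i x) := by
  classical
  induction t using Finset.induction_on with
  | empty => simpa using concaveOn_const 0 hS
  | @insert a t ha ih =>
      simp only [Finset.sum_insert ha]
      exact (hf a (Finset.mem_insert_self a t)).add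
        (ih fun i hi => hf i (Finset.mem_insert_of_mem hi))

theorem dobrushin_concavity (n : ℕ) (J : Matrix (Fin n) (Fin n) ℝ)
    (hsymm : J.IsSymm) (hdiag : ∀ i, J i i = 0)
    (hrow : ∀ i, ∑ j, 2 * |J i j| ≤ 1) (h : Fin n → ℝ) :
    ConcaveOn ℝ {x : Fin n → ℝ | ∀ i, x i ∈ Set.Icc (-1:ℝ) 1}
      (fun x => (∑ i, ∑ j, J i j * x i * x j) + (∑ i, h i * x i) +
        ∑ i, binEnt ((1 + x i) / 2)) := by
  set S : Set (Fin n → ℝ) := {x : Fin n → ℝ | ∀ i, x i ∈ Set.Icc (-1:ℝ) 1} with hS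
  have hSconv : Convex ℝ S := by
    intro x hx y hy a b ha hb hab i
    exact convex_Icc (-1:ℝ) 1 (hx i) (hy i) ha hb hab
  set s : Fin n → Fin n → ℝ := fun i j => if J i j < 0 then -1 else 1 with hs
  set r : Fin n → ℝ := fun i => ∑ j, |J i j| with hr
  have hrle : ∀ i, r i ≤ 1 / 2 := by
    intro i
    have := hrow i
    rw [← Finset.mul_sum] at this
    simp only [hr]
    linarith
  -- the decomposition
  have hdecomp : (fun x : Fin n → ℝ => (∑ i, ∑ j, J i j * x i * x j) + (∑ i, h i * x i) +
        ∑ i, binEnt ((1 + x i) / 2))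
      = fun x => (∑ i, ∑ j, (1 / 2 * |J i j|) * (-((x i - s i j * x j) ^ 2)))
        + ∑ i, (r i * (x i) ^ 2 + h i * x i + Real.binEntropy ((1 + x i) / 2)) := by
    funext x
    have key : ∀ i j, (1 / 2 * |J i j|) * (-((x i - s i j * x j) ^ 2))
        = J i j * x i * x j - 1 / 2 * |J i j| * (x i) ^ 2 - 1 / 2 * |J i j| * (x j) ^ 2 := by
      intro i j
      by_cases hij : J i j < 0
      · rw [abs_of_neg hij]; simp only [hs, if_pos hij]; ring
      · rw [abs_of_nonneg (not_lt.1 hij)]; simp only [hs, if_neg hij]; ring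
    have hA : (∑ i, ∑ j, (1 / 2 * |J i j|) * (-((x i - s i j * x j) ^ 2)))
        = (∑ i, ∑ j, J i j * x i * x j) - ∑ i, r i * (x i) ^ 2 := by
      calc (∑ i, ∑ j, (1 / 2 * |J i j|) * (-((x i - s i j * x j) ^ 2)))
          = ∑ i, ∑ j, (J i j * x i * x j - 1 / 2 * |J i j| * (x i) ^ 2
              - 1 / 2 * |J i j| * (x j) ^ 2) :=
            Finset.sum_congr rfl fun i _ => Finset.sum_congr rfl fun j _ => key i j
        _ = (∑ i, ∑ j, J i j * x i * x j) - (∑ i, ∑ j, 1 / 2 * |J i j| * (x i) ^ 2)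
              - (∑ i, ∑ j, 1 / 2 * |J i j| * (x j) ^ 2) := by
            simp [Finset.sum_sub_distrib]
        _ = (∑ i, ∑ j, J i j * x i * x j) - (∑ i, 1 / 2 * r i * (x i) ^ 2)
              - (∑ i, 1 / 2 * r i * (x i) ^ 2) := by
            have e : ∀ i : Fin n, (∑ j, 1 / 2 * |J i j| * (x i) ^ 2)
                = 1 / 2 * r i * (x i) ^ 2 := by
              intro i
              calc ∑ j, 1 / 2 * |J i j| * (x i) ^ 2
                  = ∑ j, 1 / 2 * (x i) ^ 2 * |J i j| :=
                    Finset.sum_congr rfl fun j _ => by ring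
                _ = 1 / 2 * (x i) ^ 2 * ∑ j, |J i j| := by rw [Finset.mul_sum]
                _ = 1 / 2 * r i * (x i) ^ 2 := by simp only [hr]; ring
            have e' : ∀ j : Fin n, (∑ i, 1 / 2 * |J i j| * (x j) ^ 2)
                = 1 / 2 * r j * (x j) ^ 2 := by
              intro j
              calc ∑ i, 1 / 2 * |J i j| * (x j) ^ 2
                  = ∑ i, 1 / 2 * (x j) ^ 2 * |J j i| :=
                    Finset.sum_congr rfl fun i _ => by rw [hsymm.apply j i]; ring
                _ = 1 / 2 * (x j) ^ 2 * ∑ i, |J j i| := by rw [Finset.mul_sum]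
                _ = 1 / 2 * r j * (x j) ^ 2 := by simp only [hr]; ring
            congr 1
            · congr 1
              exact Finset.sum_congr rfl fun i _ => e i
            · rw [Finset.sum_comm]
              exact Finset.sum_congr rfl fun j _ => e' j
        _ = (∑ i, ∑ j, J i j * x i * x j) - ∑ i, r i * (x i) ^ 2 := by
            rw [sub_sub, ← Finset.sum_add_distrib]
            congr 1
            exact Finset.sum_congr rfl fun i _ => by ring
    rw [hA, binEnt_eq, Finset.sum_add_distrib, Finset.sum_add_distrib]
    ring
  rw [hdecomp]
  apply ConcaveOn.add
  · refine concaveOn_finsetSum hSconv fun i _ => concaveOn_finsetSum hSconv fun j _ => ?_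
    have hsq : ConvexOn ℝ (Set.univ : Set (Fin n → ℝ)) (fun x => (x i - s i j * x j) ^ 2) := by
      have h2 : ConvexOn ℝ (Set.univ : Set ℝ) (fun y : ℝ => y ^ 2) := Even.convexOn_pow even_two
      have := h2.comp_affineMap
        ((LinearMap.proj i - s i j • LinearMap.proj j : (Fin n → ℝ) →ₗ[ℝ] ℝ).toAffineMap)
      simpa [Function.comp_def, smul_eq_mul] using this
    have hneg : ConcaveOn ℝ S (fun x => -((x i - s i j * x j) ^ 2)) :=
      (hsq.neg).subset (Set.subset_univ S) hSconv
    have := hneg.smul (c := 1 / 2 * |J i j|) (by positivity)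
    simpa [smul_eq_mul] using this
  · refine concaveOn_finsetSum hSconv fun i _ => ?_
    have h1 := oneDim_concave (r i) (h i) (hrle i)
    have := h1.comp_affineMap ((LinearMap.proj i : (Fin n → ℝ) →ₗ[ℝ] ℝ).toAffineMap)
    refine this.subset (fun x hx => ?_) hSconv
    simpa using hx i
end

section
/- Let n be a natural number with n ≥ 3 and let z ∈ [0,n] be real. Define y = ⌈z⌉ if z ≤ n/2 and y = ⌊z⌋ if z > n/2. Then n·H(y/n) ≥ n·H(z/n) - log 5, where H is the binary entropy function. -/
open Real Set

lemma binEnt_eq_binEntropy : binEnt = binEntropy := by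
  funext p
  simp only [binEnt, neg_mul, binEntropy, log_inv, mul_neg]
  ring

lemma abs_deriv_binEntropy_le {x : ℝ} (hx : x ∈ Icc (1/6 : ℝ) (5/6)) :
    |deriv binEntropy x| ≤ log 5 := by
  obtain ⟨hx₁, hx₂⟩ := hx
  have hlog5 : log 5 = log (5/6) - log (1/6) := by
    rw [← log_div (by norm_num) (by norm_num)]
    norm_num
  have hlog_x := log_le_log (by norm_num) hx₁
  have hlog_x' := log_le_log (by linarith) hx₂
  have hlog_one_sub : log (1/6) ≤ log (1 - x) := log_le_log (by norm_num) (by linarith)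
  have hlog_one_sub' : log (1 - x) ≤ log (5/6) := log_le_log (by linarith) (by linarith)
  rw [deriv_binEntropy, abs_le]
  constructor <;> linarith

lemma abs_binEntropy_sub_le {a b : ℝ} (ha : a ∈ Icc (1/6 : ℝ) (5/6))
    (hb : b ∈ Icc (1/6 : ℝ) (5/6)) :
    |binEntropy b - binEntropy a| ≤ log 5 * |b - a| := by
  have hdiff : ∀ x ∈ Icc (1/6 : ℝ) (5/6), DifferentiableAt ℝ binEntropy x := fun x hx =>
    differentiableAt_binEntropy (by rintro rfl; norm_num at hx) (by rintro rfl; norm_num at hx)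
  simpa only [Real.norm_eq_abs] using (convex_Icc (1/6 : ℝ) (5/6)).norm_image_sub_le_of_norm_deriv_le
    hdiff (fun x hx => abs_deriv_binEntropy_le hx) ha hb

lemma binEntropy_le_add_log_five_mul_sub {p q : ℝ} (hp₀ : 0 ≤ p) (hp : p ≤ 1/2) (hpq : p ≤ q)
    (hq : q ≤ p + 1/3) :
    binEntropy p ≤ binEntropy q + log 5 * (q - p) := by
  have hlog5 : 0 ≤ log 5 := log_nonneg (by norm_num)
  rcases le_or_gt q (1/2) with hq_half | hq_half
  · have hmono : binEntropy p ≤ binEntropy q :=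
      binEntropy_strictMonoOn.monotoneOn ⟨hp₀, by norm_num [hp]⟩ ⟨by linarith, by norm_num [hq_half]⟩
        hpq
    nlinarith
  · have hlip := abs_binEntropy_sub_le (a := p) (b := q) ⟨by linarith, by linarith⟩
      ⟨by linarith, by linarith⟩
    rw [abs_of_nonneg (sub_nonneg.2 hpq)] at hlip
    linarith [neg_abs_le (binEntropy q - binEntropy p)]

lemma mul_binEntropy_div_sub_log_five_le {n z y : ℝ} (hn : 3 ≤ n) (hz₀ : 0 ≤ z) (hz : z ≤ n / 2)
    (hzy : z ≤ y) (hy : y ≤ z + 1) :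
    n * binEntropy (z / n) - log 5 ≤ n * binEntropy (y / n) := by
  have hn₀ : 0 < n := by linarith
  have hstep : y / n - z / n ≤ 1 / 3 := by
    rw [← sub_div, div_le_iff₀ hn₀]
    linarith
  have key := binEntropy_le_add_log_five_mul_sub (div_nonneg hz₀ hn₀.le)
    (by rw [div_le_iff₀ hn₀]; linarith) (div_le_div_of_nonneg_right hzy hn₀.le) (by linarith)
  have hscaled : n * (log 5 * (y / n - z / n)) = log 5 * (y - z) := by
    field_simp
  nlinarith [log_nonneg (show (1 : ℝ) ≤ 5 by norm_num)]

theorem entropy_rounding (n : ℕ) (hn : 3 ≤ n) (z : ℝ) (hz : z ∈ Set.Icc (0:ℝ) n) :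
    (n : ℝ) * binEnt ((if z ≤ n / 2 then ((⌈z⌉ : ℤ) : ℝ) else ((⌊z⌋ : ℤ) : ℝ)) / n)
      ≥ (n : ℝ) * binEnt (z / n) - Real.log 5 := by
  obtain ⟨hz₀, hzn⟩ := hz
  have hn' : (3 : ℝ) ≤ n := by exact_mod_cast hn
  rw [binEnt_eq_binEntropy, ge_iff_le]
  split_ifs with hz_half
  · exact mul_binEntropy_div_sub_log_five_le hn' hz₀ hz_half (Int.le_ceil z)
      (Int.ceil_lt_add_one z).le
  · have hreflect : ∀ x : ℝ, binEntropy ((n - x) / n) = binEntropy (x / n) := fun x => by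
      rw [sub_div, div_self (by positivity), binEntropy_one_sub]
    have := mul_binEntropy_div_sub_log_five_le hn' (sub_nonneg.2 hzn) (by linarith)
      (sub_le_sub_left (Int.floor_le z) n) (by linarith [Int.lt_floor_add_one z])
    rwa [hreflect, hreflect] at this
end

section
/- Let J be an n×n real symmetric matrix with zero diagonal, and suppose J = D + W where D = ∑_{t=1}^s D^{(t)} is a sum of cut matrices D^{(t)} = CUT(R_t, C_t, d_t) with ∑_t d_t² ≤ 16‖J‖_F²/n². Let r_i(x) = ∑_{a∈R_i} x_a and c_i(x) = ∑_{b∈C_i} x_b. Then for any x, x' ∈ [-1,1]^n with |r_i(x) - r_i(x')| ≤ υn and |c_i(x) - c_i(x')| ≤ υn for all i, we have |xᵀDx - x'ᵀDx'| ≤ 8‖J‖_F υ n s^{1/2}. -/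
/-!
The quadratic form of `CUT(R, C, d)` at `x` is `d · r(x) · c(x)`, so the difference of the two
quadratic forms splits into one term per cut, each at most `|d_t| · 2 n · υ n` by the product rule
`rc - r'c' = r(c - c') + (r - r')c'` and `|r|, |c'| ≤ n`. Cauchy–Schwarz turns `∑ |d_t|` into
`√s · (∑ d_t²)^{1/2} ≤ √s · 4‖J‖_F / n`.
-/

open Finset

noncomputable def frobNorm {n : ℕ} (J : Matrix (Fin n) (Fin n) ℝ) : ℝ :=
  Real.sqrt (∑ i, ∑ j, (J i j) ^ 2)

/-- The cut matrix CUT(S, T, d). -/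
def cutMatrix {n : ℕ} (S T : Finset (Fin n)) (d : ℝ) : Matrix (Fin n) (Fin n) ℝ :=
  Matrix.of fun i j => if i ∈ S ∧ j ∈ T then d else 0

lemma quadForm_cutMatrix {n : ℕ} (S T : Finset (Fin n)) (e : ℝ) (y : Fin n → ℝ) :
    ∑ i, ∑ j, cutMatrix S T e i j * y i * y j = e * ((∑ a ∈ S, y a) * ∑ b ∈ T, y b) := by
  rw [sum_mul_sum, mul_sum]
  simp only [cutMatrix, Matrix.of_apply, ite_and, ite_mul, zero_mul, sum_ite_irrel,
    sum_const_zero, Fintype.sum_ite_mem, mul_sum]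
  exact sum_congr rfl fun i _ => sum_congr rfl fun j _ => by ring

lemma quadForm_sum_cutMatrix {n s : ℕ} (R C : Fin s → Finset (Fin n)) (d : Fin s → ℝ)
    (y : Fin n → ℝ) :
    ∑ i, ∑ j, (∑ t, cutMatrix (R t) (C t) (d t)) i j * y i * y j
      = ∑ t, d t * ((∑ a ∈ R t, y a) * ∑ b ∈ C t, y b) :=
  calc _ = ∑ i, ∑ j, ∑ t, cutMatrix (R t) (C t) (d t) i j * y i * y j := by
        simp only [Matrix.sum_apply, sum_mul]
    _ = ∑ t, ∑ i, ∑ j, cutMatrix (R t) (C t) (d t) i j * y i * y j := by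
        simp only [sum_comm (γ := Fin s)]
    _ = _ := sum_congr rfl fun t _ => quadForm_cutMatrix _ _ _ _

lemma abs_sum_le_card_of_abs_le_one {ι : Type*} [Fintype ι] (T : Finset ι) {y : ι → ℝ}
    (hy : ∀ i, |y i| ≤ 1) : |∑ a ∈ T, y a| ≤ Fintype.card ι :=
  calc |∑ a ∈ T, y a| ≤ ∑ a ∈ T, |y a| := abs_sum_le_sum_abs _ _
    _ ≤ ∑ a ∈ T, 1 := sum_le_sum fun a _ => hy a
    _ ≤ Fintype.card ι := by simpa using T.card_le_univ

lemma abs_mul_sub_mul_le {r r' c c' N ε : ℝ} (hr : |r| ≤ N) (hc' : |c'| ≤ N)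
    (hrr' : |r - r'| ≤ ε) (hcc' : |c - c'| ≤ ε) : |r * c - r' * c'| ≤ 2 * N * ε := by
  have hε : 0 ≤ ε := (abs_nonneg _).trans hrr'
  have hN : 0 ≤ N := (abs_nonneg _).trans hr
  calc |r * c - r' * c'| = |r * (c - c') + (r - r') * c'| := by ring_nf
    _ ≤ |r| * |c - c'| + |r - r'| * |c'| := by
        rw [← abs_mul, ← abs_mul]; exact abs_add_le _ _
    _ ≤ N * ε + ε * N := by gcongr
    _ = 2 * N * ε := by ring

lemma mul_sum_abs_le_of_mul_sum_sq_le {ι : Type*} (S : Finset ι) (d : ι → ℝ) {a b : ℝ}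
    (hb : 0 ≤ b) (h : a ^ 2 * ∑ i ∈ S, d i ^ 2 ≤ b ^ 2) :
    a * ∑ i ∈ S, |d i| ≤ b * √(#S : ℝ) := by
  refine le_of_pow_le_pow_left₀ two_ne_zero (by positivity) ?_
  have hcs : (∑ i ∈ S, |d i|) ^ 2 ≤ #S * ∑ i ∈ S, d i ^ 2 := by
    simpa only [sq_abs] using sq_sum_le_card_mul_sum_sq (s := S) (f := fun i => |d i|)
  calc (a * ∑ i ∈ S, |d i|) ^ 2 = a ^ 2 * (∑ i ∈ S, |d i|) ^ 2 := mul_pow _ _ _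
    _ ≤ a ^ 2 * (#S * ∑ i ∈ S, d i ^ 2) := by gcongr
    _ = #S * (a ^ 2 * ∑ i ∈ S, d i ^ 2) := by ring
    _ ≤ #S * b ^ 2 := by gcongr
    _ = (b * √(#S : ℝ)) ^ 2 := by rw [mul_pow, Real.sq_sqrt (Nat.cast_nonneg _), mul_comm]

theorem cut_quadratic_form_stability_general (n s : ℕ)
    (J : Matrix (Fin n) (Fin n) ℝ)
    (R C : Fin s → Finset (Fin n)) (d : Fin s → ℝ)
    (hd : ∑ t, (d t) ^ 2 ≤ 16 * frobNorm J ^ 2 / (n : ℝ) ^ 2)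
    (υ : ℝ) (hυ : υ ∈ Set.Ioo (0:ℝ) 1)
    (x x' : Fin n → ℝ) (hx : ∀ i, |x i| ≤ 1) (hx' : ∀ i, |x' i| ≤ 1)
    (hr : ∀ t, |(∑ a ∈ R t, x a) - ∑ a ∈ R t, x' a| ≤ υ * n)
    (hc : ∀ t, |(∑ b ∈ C t, x b) - ∑ b ∈ C t, x' b| ≤ υ * n) :
    |(∑ i, ∑ j, (∑ t, cutMatrix (R t) (C t) (d t)) i j * x i * x j) -
        ∑ i, ∑ j, (∑ t, cutMatrix (R t) (C t) (d t)) i j * x' i * x' j|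
      ≤ 8 * frobNorm J * υ * n * Real.sqrt s := by
  have hterm : ∀ t, |d t * ((∑ a ∈ R t, x a) * ∑ b ∈ C t, x b)
      - d t * ((∑ a ∈ R t, x' a) * ∑ b ∈ C t, x' b)| ≤ |d t| * (2 * n * (υ * n)) := by
    intro t
    rw [← mul_sub, abs_mul]
    gcongr
    exact abs_mul_sub_mul_le (by simpa using abs_sum_le_card_of_abs_le_one (R t) hx)
      (by simpa using abs_sum_le_card_of_abs_le_one (C t) hx') (hr t) (hc t)
  have hF : 0 ≤ frobNorm J := Real.sqrt_nonneg _
  have hd' : (n : ℝ) ^ 2 * ∑ t, d t ^ 2 ≤ (4 * frobNorm J) ^ 2 := by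
    rw [mul_comm]
    exact mul_le_of_le_div₀ (by positivity) (by positivity) (hd.trans_eq (by ring))
  have hsum : (n : ℝ) * ∑ t, |d t| ≤ 4 * frobNorm J * √(s : ℝ) := by
    simpa using mul_sum_abs_le_of_mul_sum_sq_le univ d (a := n) (by positivity) hd'
  rw [quadForm_sum_cutMatrix, quadForm_sum_cutMatrix, ← sum_sub_distrib]
  calc _ ≤ ∑ t, |d t| * (2 * n * (υ * n)) :=
        (abs_sum_le_sum_abs _ _).trans (sum_le_sum fun t _ => hterm t)
    _ = 2 * υ * n * (n * ∑ t, |d t|) := by rw [← sum_mul]; ring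
    _ ≤ 2 * υ * n * (4 * frobNorm J * √(s : ℝ)) := by have := hυ.1.le; gcongr
    _ = 8 * frobNorm J * υ * n * Real.sqrt s := by ring

theorem cut_quadratic_form_stability (n s : ℕ)
    (J W : Matrix (Fin n) (Fin n) ℝ) (hsymm : J.IsSymm) (hdiag : ∀ i, J i i = 0)
    (R C : Fin s → Finset (Fin n)) (d : Fin s → ℝ)
    (hJ : J = (∑ t, cutMatrix (R t) (C t) (d t)) + W)
    (hd : ∑ t, (d t) ^ 2 ≤ 16 * frobNorm J ^ 2 / (n : ℝ) ^ 2)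
    (υ : ℝ) (hυ : υ ∈ Set.Ioo (0:ℝ) 1)
    (x x' : Fin n → ℝ) (hx : ∀ i, |x i| ≤ 1) (hx' : ∀ i, |x' i| ≤ 1)
    (hr : ∀ t, |(∑ a ∈ R t, x a) - ∑ a ∈ R t, x' a| ≤ υ * n)
    (hc : ∀ t, |(∑ b ∈ C t, x b) - ∑ b ∈ C t, x' b| ≤ υ * n) :
    |(∑ i, ∑ j, (∑ t, cutMatrix (R t) (C t) (d t)) i j * x i * x j) -
        ∑ i, ∑ j, (∑ t, cutMatrix (R t) (C t) (d t)) i j * x' i * x' j|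
      ≤ 8 * frobNorm J * υ * n * Real.sqrt s :=
  cut_quadratic_form_stability_general n s J R C d hd υ hυ x x' hx hx' hr hc
end
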